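/- arXiv:2109.07502 — 2 statements merged into one kernel-verified Lean document; each statement's English description precedes it below -/
import Mathlib

section
/- If in addition E[Y1 | Z = 1] = E[Y1] (randomization of the initial treatment assignment), then the treatment diffusion bias satisfies b = E[Y0] − E[Y0 | Z' = 0, Z = 0] · (1 − ρ̄) − E[Y1 | Z' = 1, Z = 0] · ρ̄. -/
open MeasureTheory ProbabilityTheory

private lemma integral_cond_eq_aux {Ω : Type*} [MeasurableSpace Ω] (μ : Measure Ω)
    (s : Set Ω) (f : Ω → ℝ) :
    ∫ ω, f ω ∂(μ[|s]) = (μ s).toReal⁻¹ * ∫ ω in s, f ω ∂μ := by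
  rw [ProbabilityTheory.cond, integral_smul_measure, ENNReal.toReal_inv, smul_eq_mul]

/-- Under randomization of the initial assignment (E[Y1 | Z = 1] = E[Y1]), the treatment
diffusion bias is b = E[Y0] − E[Y0 | Z' = 0, Z = 0]·(1 − ρ̄) − E[Y1 | Z' = 1, Z = 0]·ρ̄. -/
theorem diffusion_bias_randomized_formula
    {Ω : Type*} [MeasurableSpace Ω] (μ : Measure Ω) [IsProbabilityMeasure μ]
    (Z Z' : Ω → ℝ) (hZ : Measurable Z) (hZ' : Measurable Z')
    (hZ01 : ∀ ω, Z ω = 0 ∨ Z ω = 1) (hZ'01 : ∀ ω, Z' ω = 0 ∨ Z' ω = 1)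
    (Y0 Y1 Y : Ω → ℝ) (hY0 : Integrable Y0 μ) (hY1 : Integrable Y1 μ)
    (hY : ∀ ω, Y ω = Z' ω * Y1 ω + (1 - Z' ω) * Y0 ω)
    (hZpos : 0 < μ {ω | Z ω = 1}) (hZlt : μ {ω | Z ω = 1} < 1)
    (hmono : μ[|{ω | Z ω = 1}] {ω | Z' ω = 1} = 1)
    (ρ : ℝ) (hρ : ρ = (μ[|{ω | Z ω = 0}] {ω | Z' ω = 1}).toReal)
    (hρ0 : 0 < ρ) (hρ1 : ρ < 1)
    (τstar τnodiff b : ℝ)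
    (hτstar : τstar = ∫ ω, Y1 ω ∂μ - ∫ ω, Y0 ω ∂μ)
    (hτnodiff : τnodiff = ∫ ω, Y ω ∂(μ[|{ω | Z ω = 1}]) - ∫ ω, Y ω ∂(μ[|{ω | Z ω = 0}]))
    (hb : b = τnodiff - τstar)
    (hrand : ∫ ω, Y1 ω ∂(μ[|{ω | Z ω = 1}]) = ∫ ω, Y1 ω ∂μ) :
    b = ∫ ω, Y0 ω ∂μ
        - (∫ ω, Y0 ω ∂(μ[|{ω | Z' ω = 0 ∧ Z ω = 0}])) * (1 - ρ)
        - (∫ ω, Y1 ω ∂(μ[|{ω | Z' ω = 1 ∧ Z ω = 0}])) * ρ := by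
  set A1 : Set Ω := {ω | Z ω = 1} with hA1
  set A0 : Set Ω := {ω | Z ω = 0} with hA0
  set B1 : Set Ω := {ω | Z' ω = 1} with hB1
  set B0 : Set Ω := {ω | Z' ω = 0} with hB0
  have mA1 : MeasurableSet A1 := hZ (measurableSet_singleton 1)
  have mA0 : MeasurableSet A0 := hZ (measurableSet_singleton 0)
  have mB1 : MeasurableSet B1 := hZ' (measurableSet_singleton 1)
  have mB0 : MeasurableSet B0 := hZ' (measurableSet_singleton 0)
  have hC1 : {ω | Z' ω = 1 ∧ Z ω = 0} = A0 ∩ B1 := by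
    ext ω; simp [hA0, hB1, Set.mem_inter_iff, and_comm]
  have hC0 : {ω | Z' ω = 0 ∧ Z ω = 0} = A0 ∩ B0 := by
    ext ω; simp [hA0, hB0, Set.mem_inter_iff, and_comm]
  -- Step 1: on Z = 1, Y = Y1 a.e.
  have hμA1ne : μ A1 ≠ 0 := hZpos.ne'
  have : IsProbabilityMeasure (μ[|A1]) := cond_isProbabilityMeasure hμA1ne
  have hB0null : μ[|A1] B0 = 0 := by
    have hcompl : μ[|A1] B1ᶜ = 0 := by
      rw [measure_compl mB1 (measure_ne_top _ _), hmono]; simp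
    refine measure_mono_null ?_ hcompl
    intro ω hω h1
    have h0 : Z' ω = 0 := hω
    have h1' : Z' ω = 1 := h1
    exact absurd (h0.symm.trans h1') (by norm_num)
  have hYA1 : ∫ ω, Y ω ∂(μ[|A1]) = ∫ ω, Y1 ω ∂(μ[|A1]) := by
    refine integral_congr_ae (Filter.eventuallyEq_iff_exists_mem.mpr ?_)
    refine ⟨B0ᶜ, ?_, ?_⟩
    · rw [mem_ae_iff]; simpa using hB0null
    · intro ω hω
      rcases hZ'01 ω with h0 | h1
      · exact absurd h0 (by simpa [hB0] using hω)
      · rw [hY ω, h1]; ring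
  -- Step 2: μ A0 ≠ 0
  have hμA0ne : μ A0 ≠ 0 := by
    intro h
    rw [hρ, ProbabilityTheory.cond, h, Measure.restrict_eq_zero.mpr h] at hρ0
    simp at hρ0
  -- basic measure arithmetic
  have hBuniv : B1 ∪ B0 = Set.univ := by
    ext ω
    simp only [Set.mem_union, hB1, hB0, Set.mem_setOf_eq, Set.mem_univ, iff_true]
    rcases hZ'01 ω with h | h
    · exact Or.inr h
    · exact Or.inl h
  have hpart : A0 = (A0 ∩ B1) ∪ (A0 ∩ B0) := by
    rw [← Set.inter_union_distrib_left, hBuniv, Set.inter_univ]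
  have hdisj : Disjoint (A0 ∩ B1) (A0 ∩ B0) := by
    refine Set.disjoint_left.mpr ?_
    rintro ω ⟨-, h1⟩ ⟨-, h0⟩
    simp only [hB1, Set.mem_setOf_eq] at h1
    simp only [hB0, Set.mem_setOf_eq] at h0
    rw [h0] at h1; norm_num at h1
  set p0 : ℝ := (μ A0).toReal with hp0def
  set m1 : ℝ := (μ (A0 ∩ B1)).toReal with hm1def
  set m0 : ℝ := (μ (A0 ∩ B0)).toReal with hm0def
  have hsum : p0 = m1 + m0 := by
    rw [hp0def, hm1def, hm0def, ← ENNReal.toReal_add (measure_ne_top _ _) (measure_ne_top _ _)]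
    congr 1
    conv_lhs => rw [hpart]
    exact measure_union hdisj (mA0.inter mB0)
  have hp0pos : 0 < p0 := ENNReal.toReal_pos hμA0ne (measure_ne_top _ _)
  have hρval : ρ = m1 / p0 := by
    rw [hρ, cond_apply mA0, ENNReal.toReal_mul, ENNReal.toReal_inv, hm1def, hp0def,
      inv_mul_eq_div]
  have hm1pos : 0 < m1 := by
    by_contra h
    push_neg at h
    have : m1 = 0 := le_antisymm h ENNReal.toReal_nonneg
    rw [hρval, this, zero_div] at hρ0; exact lt_irrefl 0 hρ0
  have hm0pos : 0 < m0 := by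
    by_contra h
    push_neg at h
    have hm0 : m0 = 0 := le_antisymm h ENNReal.toReal_nonneg
    rw [hρval, hsum, hm0, add_zero, div_self hm1pos.ne'] at hρ1
    exact lt_irrefl 1 hρ1
  -- split the integral of Y over A0
  have hIntOn1 : IntegrableOn Y (A0 ∩ B1) μ := by
    refine hY1.integrableOn.congr_fun ?_ (mA0.inter mB1)
    rintro ω ⟨-, h1⟩
    simp only [hB1, Set.mem_setOf_eq] at h1
    rw [hY ω, h1]; ring
  have hIntOn0 : IntegrableOn Y (A0 ∩ B0) μ := by
    refine hY0.integrableOn.congr_fun ?_ (mA0.inter mB0)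
    rintro ω ⟨-, h0⟩
    simp only [hB0, Set.mem_setOf_eq] at h0
    rw [hY ω, h0]; ring
  set I1 : ℝ := ∫ ω in A0 ∩ B1, Y1 ω ∂μ with hI1def
  set I0 : ℝ := ∫ ω in A0 ∩ B0, Y0 ω ∂μ with hI0def
  have hYA0 : ∫ ω, Y ω ∂(μ[|A0]) = p0⁻¹ * (I1 + I0) := by
    rw [integral_cond_eq_aux]
    congr 1
    rw [show (∫ ω in A0, Y ω ∂μ) = ∫ ω in (A0 ∩ B1) ∪ (A0 ∩ B0), Y ω ∂μ by rw [← hpart],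
      setIntegral_union hdisj (mA0.inter mB0) hIntOn1 hIntOn0]
    congr 1
    · refine setIntegral_congr_fun (mA0.inter mB1) ?_
      rintro ω ⟨-, h1⟩
      simp only [hB1, Set.mem_setOf_eq] at h1
      rw [hY ω, h1]; ring
    · refine setIntegral_congr_fun (mA0.inter mB0) ?_
      rintro ω ⟨-, h0⟩
      simp only [hB0, Set.mem_setOf_eq] at h0
      rw [hY ω, h0]; ring
  -- conditional expectations on the two cells
  have hcond1 : ∫ ω, Y1 ω ∂(μ[|{ω | Z' ω = 1 ∧ Z ω = 0}]) = m1⁻¹ * I1 := by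
    rw [hC1, integral_cond_eq_aux]
  have hcond0 : ∫ ω, Y0 ω ∂(μ[|{ω | Z' ω = 0 ∧ Z ω = 0}]) = m0⁻¹ * I0 := by
    rw [hC0, integral_cond_eq_aux]
  -- final arithmetic
  rw [hb, hτnodiff, hτstar, hYA1, hrand, hYA0, hcond1, hcond0, hρval, hsum]
  have h1 : m1 ≠ 0 := hm1pos.ne'
  have h0 : m0 ≠ 0 := hm0pos.ne'
  have hs : m1 + m0 ≠ 0 := by positivity
  field_simp
  ring
end

section
/- Under assumptions (a)–(d), the conditional expectation of the control-branch contribution given the network information satisfies μ[Y0 · 1{Z' = 0} | σ(W)] = E[Y0] · (1 − π'(W)) μ-almost surely, where π'(W) = π + ρ(W)(1 − π). -/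
open MeasureTheory ProbabilityTheory

lemma condIndepFun_congr_left' {Ω : Type*} {m mΩ : MeasurableSpace Ω} [StandardBorelSpace Ω]
    (hm : m ≤ mΩ) (μ : Measure Ω) [IsFiniteMeasure μ]
    {β γ : Type*} [MeasurableSpace β] [MeasurableSpace γ]
    {f f' : Ω → β} {g : Ω → γ} (h : CondIndepFun m hm f g μ) (hff' : f =ᵐ[μ] f') :
    CondIndepFun m hm f' g μ := by
  have h0 : μ {x | ¬ f x = f' x} = 0 := ae_iff.mp hff'
  obtain ⟨N, hNsub, hNmeas, hNnull⟩ := exists_measurable_superset_of_null h0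
  · have hcond : (fun ω => (condExpKernel μ m ω N).toReal) =ᵐ[μ] μ⟦N | m⟧ :=
      condExpKernel_ae_eq_condExp hm hNmeas
    have hzero : (μ⟦N | m⟧) =ᵐ[μ] 0 := by
      have : (N.indicator (fun _ => (1:ℝ))) =ᵐ[μ] 0 := by
        filter_upwards [measure_eq_zero_iff_ae_notMem.mp hNnull] with x hx
        simp [Set.indicator_of_notMem hx]
      calc (μ⟦N | m⟧) =ᵐ[μ] μ[(0 : Ω → ℝ) | m] := condExp_congr_ae this
        _ =ᵐ[μ] 0 := by rw [condExp_zero]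
    have hae : ∀ᵐ ω ∂μ, condExpKernel μ m ω N = 0 := by
      filter_upwards [hcond, hzero] with ω h1 h2
      have : (condExpKernel μ m ω N).toReal = 0 := by rw [h1]; exact h2
      exact (ENNReal.toReal_eq_zero_iff _).mp this |>.resolve_right (measure_ne_top _ _)
    have htrim : ∀ᵐ ω ∂(μ.trim hm), condExpKernel μ m ω N = 0 := by
      rw [ae_iff]
      have hms : MeasurableSet[m] {ω | ¬ condExpKernel μ m ω N = 0} :=
        ((measurable_condExpKernel hNmeas) (measurableSet_singleton 0)).compl
      rw [trim_measurableSet_eq hm hms]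
      exact ae_iff.mp hae
    refine Kernel.IndepFun.congr' h ?_ (Filter.Eventually.of_forall fun a => .rfl)
    filter_upwards [htrim] with a haN
    have : (condExpKernel μ m a) {x | f x ≠ f' x} = 0 :=
      measure_mono_null hNsub haN
    exact this

/-- Bernoulli randomized setting: the conditional expectation of the control-branch contribution
given the network information satisfies μ[Y0·1{Z'=0} | σ(W)] = E[Y0]·(1 − π'(W)) μ-a.s.,
where π'(W) = π + ρ(W)(1 − π). -/
theorem control_branch_condexp_bernoulli
    {Ω : Type*} [MeasurableSpace Ω] [StandardBorelSpace Ω] [Nonempty Ω]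
    (μ : Measure Ω) [IsProbabilityMeasure μ]
    {𝒲 : Type*} [MeasurableSpace 𝒲] [StandardBorelSpace 𝒲]
    (W : Ω → 𝒲) (hW : Measurable W)
    (Z Z' : Ω → ℝ) (hZ : Measurable Z) (hZ' : Measurable Z')
    (hZ01 : ∀ ω, Z ω = 0 ∨ Z ω = 1) (hZ'01 : ∀ ω, Z' ω = 0 ∨ Z' ω = 1)
    (Y0 Y1 Y : Ω → ℝ) (hY0 : Integrable Y0 μ) (hY1 : Integrable Y1 μ)
    (hYdef : ∀ ω, Y ω = Z' ω * Y1 ω + (1 - Z' ω) * Y0 ω)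
    (π : ℝ) (hπ0 : 0 < π) (hπ1 : π < 1)
    (ρ : 𝒲 → ℝ) (hρmeas : Measurable ρ) (hρ01 : ∀ w, 0 ≤ ρ w ∧ ρ w < 1)
    (ha : IndepFun Z W μ) (haπ : μ {ω | Z ω = 1} = ENNReal.ofReal π)
    (hb : ∀ᵐ ω ∂μ, Z ω = 1 → Z' ω = 1)
    (hc1 : IndepFun Y1 (fun ω => (Z ω, W ω)) μ)
    (hc0 : IndepFun Y0 (fun ω => (Z ω, W ω)) μ)
    (hd0 : CondIndepFun (MeasurableSpace.comap W inferInstance) hW.comap_le Y0 Z'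
      (μ[|{ω | Z ω = 0}]))
    (hd1 : CondIndepFun (MeasurableSpace.comap W inferInstance) hW.comap_le Y1 Z'
      (μ[|{ω | Z ω = 0}]))
    (hdρ : (μ[|{ω | Z ω = 0}])[fun ω => if Z' ω = 1 then (1:ℝ) else 0 |
        MeasurableSpace.comap W inferInstance]
      =ᵐ[μ[|{ω | Z ω = 0}]] fun ω => ρ (W ω)) :
    μ[fun ω => Y0 ω * (if Z' ω = 0 then (1:ℝ) else 0) | MeasurableSpace.comap W inferInstance]
      =ᵐ[μ] fun ω => (∫ ω', Y0 ω' ∂μ) * (1 - (π + ρ (W ω) * (1 - π))) := by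
  classical
  have hm : MeasurableSpace.comap W inferInstance ≤ ‹MeasurableSpace Ω› := hW.comap_le
  set s0 : Set Ω := {ω | Z ω = 0} with hs0_def
  have hs0 : MeasurableSet s0 := hZ (measurableSet_singleton 0)
  have hs1c : {ω | Z ω = 1} = s0ᶜ := by
    ext ω; rcases hZ01 ω with h | h <;> simp [hs0_def, h]
  have hμs0 : μ s0 = ENNReal.ofReal (1 - π) := by
    have h1 : μ s0ᶜ = ENNReal.ofReal π := by rw [← hs1c]; exact haπ
    have h2 : μ s0 = 1 - ENNReal.ofReal π := by
      have h3 := prob_compl_eq_one_sub (μ := μ) hs0.compl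
      rwa [compl_compl, h1] at h3
    rw [h2, ENNReal.ofReal_sub _ hπ0.le, ENNReal.ofReal_one]
  have hs0ne : μ s0 ≠ 0 := by
    rw [hμs0]; simp [ENNReal.ofReal_eq_zero]; linarith
  have hs0toReal : (μ s0).toReal = 1 - π := by
    rw [hμs0, ENNReal.toReal_ofReal (by linarith)]
  set ν : Measure Ω := μ[|s0] with hν_def
  haveI hνprob : IsProbabilityMeasure ν := cond_isProbabilityMeasure hs0ne
  have hν_ac : ν ≪ μ := cond_absolutelyContinuous
  -- measurable representative of Y0
  obtain ⟨Y0', hY0'meas, hY0eq⟩ : ∃ Y0' : Ω → ℝ, Measurable Y0' ∧ Y0 =ᵐ[μ] Y0' :=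
    ⟨hY0.1.mk Y0, hY0.1.stronglyMeasurable_mk.measurable, hY0.1.ae_eq_mk⟩
  have hY0'int : Integrable Y0' μ := hY0.congr hY0eq
  have hY0eqν : Y0 =ᵐ[ν] Y0' := hY0eq.filter_mono hν_ac.ae_le
  have hc0' : IndepFun Y0' (fun ω => (Z ω, W ω)) μ := hc0.congr hY0eq .rfl
  have hd0' : CondIndepFun (MeasurableSpace.comap W inferInstance) hm Y0' Z' ν := condIndepFun_congr_left' hm ν hd0 hY0eqν
  have hs0eq : s0 = Z ⁻¹' {0} := rfl
  -- independence of Y0' and Z under μ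
  have hIZ : IndepFun Y0' Z μ := by
    have := hc0'.comp measurable_id measurable_fst
    simpa [Function.comp_def] using this
  -- rectangle computation under μ
  have hrectμ : ∀ {A : Set ℝ} {B : Set 𝒲}, MeasurableSet A → MeasurableSet B →
      μ (Y0' ⁻¹' A ∩ (Z ⁻¹' {0} ∩ W ⁻¹' B)) = μ (Y0' ⁻¹' A) * μ (Z ⁻¹' {0} ∩ W ⁻¹' B) := by
    intro A B hA hB
    have := hc0'.measure_inter_preimage_eq_mul A ({0} ×ˢ B) hA
      ((measurableSet_singleton 0).prod hB)
    rwa [Set.mk_preimage_prod] at this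
  have hAint : ∀ {A : Set ℝ}, MeasurableSet A → μ (Y0' ⁻¹' A ∩ s0) = μ (Y0' ⁻¹' A) * μ s0 := by
    intro A hA
    have := hIZ.measure_inter_preimage_eq_mul A {0} hA (measurableSet_singleton 0)
    rwa [← hs0eq] at this
  have hcancel : (μ s0)⁻¹ * μ s0 = 1 := ENNReal.inv_mul_cancel hs0ne (measure_ne_top μ s0)
  -- Step A : Y0' independent of W under ν
  have hAW : IndepFun Y0' W ν := by
    rw [indepFun_iff_measure_inter_preimage_eq_mul]
    intro A B hA hB
    rw [cond_apply hs0, cond_apply hs0, cond_apply hs0]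
    have h1 : s0 ∩ (Y0' ⁻¹' A ∩ W ⁻¹' B) = Y0' ⁻¹' A ∩ (Z ⁻¹' {0} ∩ W ⁻¹' B) := by
      rw [← hs0eq]; ext ω; simp only [Set.mem_inter_iff]; tauto
    have h2 : s0 ∩ Y0' ⁻¹' A = Y0' ⁻¹' A ∩ s0 := Set.inter_comm _ _
    rw [h1, hrectμ hA hB, h2, hAint hA]
    rw [← hs0eq]
    calc (μ s0)⁻¹ * (μ (Y0' ⁻¹' A) * μ (s0 ∩ W ⁻¹' B))
        = (μ (Y0' ⁻¹' A) * ((μ s0)⁻¹ * μ s0)) * ((μ s0)⁻¹ * μ (s0 ∩ W ⁻¹' B)) := by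
          rw [hcancel, mul_one]; ring
      _ = (μ s0)⁻¹ * (μ (Y0' ⁻¹' A) * μ s0) * ((μ s0)⁻¹ * μ (s0 ∩ W ⁻¹' B)) := by ring
  -- rectangle computation under ν
  have hrectν : ∀ {A : Set ℝ} {B : Set 𝒲} {C : Set ℝ}, MeasurableSet A → MeasurableSet B →
      MeasurableSet C →
      ν (Y0' ⁻¹' A ∩ (W ⁻¹' B ∩ Z' ⁻¹' C)) = ν (Y0' ⁻¹' A) * ν (W ⁻¹' B ∩ Z' ⁻¹' C) := by
    intro A B C hA hB hC
    have hprod := (condIndepFun_iff_condExp_inter_preimage_eq_mul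
      (m' := MeasurableSpace.comap W inferInstance) (hm' := hm) hY0'meas hZ').mp hd0' A C hA hC
    have hconst : (ν⟦Y0' ⁻¹' A | MeasurableSpace.comap W inferInstance⟧)
        =ᵐ[ν] fun _ => (ν (Y0' ⁻¹' A)).toReal := by
      have hind : Indep (MeasurableSpace.comap Y0' inferInstance)
          (MeasurableSpace.comap W inferInstance) ν := hAW
      have hsm : StronglyMeasurable[MeasurableSpace.comap Y0' inferInstance]
          ((Y0' ⁻¹' A).indicator (fun _ => (1:ℝ))) :=
        stronglyMeasurable_const.indicator ⟨A, hA, rfl⟩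
      have hieq := condExp_indep_eq hY0'meas.comap_le hm hsm hind
      have hval : ∫ ω, (Y0' ⁻¹' A).indicator (fun _ => (1:ℝ)) ω ∂ν = (ν (Y0' ⁻¹' A)).toReal := by
        rw [integral_indicator (hY0'meas hA), setIntegral_const, smul_eq_mul, mul_one, measureReal_def]
      exact hieq.trans (by rw [hval])
    have hT : MeasurableSet (Y0' ⁻¹' A ∩ Z' ⁻¹' C) := (hY0'meas hA).inter (hZ' hC)
    have hTind : Integrable ((Y0' ⁻¹' A ∩ Z' ⁻¹' C).indicator (fun _ => (1:ℝ))) ν :=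
      (integrable_const 1).indicator hT
    have hWB : MeasurableSet (W ⁻¹' B) := hW hB
    have hWBm : MeasurableSet[MeasurableSpace.comap W inferInstance] (W ⁻¹' B) := ⟨B, hB, rfl⟩
    have hCind : Integrable ((Z' ⁻¹' C).indicator (fun _ => (1:ℝ))) ν :=
      (integrable_const 1).indicator (hZ' hC)
    have key : (ν (W ⁻¹' B ∩ (Y0' ⁻¹' A ∩ Z' ⁻¹' C))).toReal
        = (ν (Y0' ⁻¹' A)).toReal * (ν (W ⁻¹' B ∩ Z' ⁻¹' C)).toReal := by
      have e1 : (ν (W ⁻¹' B ∩ (Y0' ⁻¹' A ∩ Z' ⁻¹' C))).toReal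
          = ∫ ω in W ⁻¹' B, (Y0' ⁻¹' A ∩ Z' ⁻¹' C).indicator (fun _ => (1:ℝ)) ω ∂ν := by
        rw [setIntegral_indicator hT, setIntegral_const, smul_eq_mul, mul_one, Set.inter_comm, measureReal_def]
      have e2 : ∫ ω in W ⁻¹' B, (Y0' ⁻¹' A ∩ Z' ⁻¹' C).indicator (fun _ => (1:ℝ)) ω ∂ν
          = ∫ ω in W ⁻¹' B,
            (ν⟦Y0' ⁻¹' A ∩ Z' ⁻¹' C | MeasurableSpace.comap W inferInstance⟧) ω ∂ν :=
        (setIntegral_condExp hm hTind hWBm).symm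
      have e3 : ∫ ω in W ⁻¹' B,
            (ν⟦Y0' ⁻¹' A ∩ Z' ⁻¹' C | MeasurableSpace.comap W inferInstance⟧) ω ∂ν
          = ∫ ω in W ⁻¹' B, (ν (Y0' ⁻¹' A)).toReal *
            (ν⟦Z' ⁻¹' C | MeasurableSpace.comap W inferInstance⟧) ω ∂ν := by
        refine integral_congr_ae ?_
        have h12 := hprod.and hconst
        filter_upwards [ae_restrict_of_ae h12] with ω hω
        rw [hω.1, hω.2]
      have e4 : ∫ ω in W ⁻¹' B, (ν (Y0' ⁻¹' A)).toReal *
            (ν⟦Z' ⁻¹' C | MeasurableSpace.comap W inferInstance⟧) ω ∂ν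
          = (ν (Y0' ⁻¹' A)).toReal *
            ∫ ω in W ⁻¹' B, (Z' ⁻¹' C).indicator (fun _ => (1:ℝ)) ω ∂ν := by
        rw [integral_const_mul, setIntegral_condExp hm hCind hWBm]
      have e5 : ∫ ω in W ⁻¹' B, (Z' ⁻¹' C).indicator (fun _ => (1:ℝ)) ω ∂ν
          = (ν (W ⁻¹' B ∩ Z' ⁻¹' C)).toReal := by
        rw [setIntegral_indicator (hZ' hC), setIntegral_const, smul_eq_mul, mul_one,
          Set.inter_comm, measureReal_def]
      rw [e1, e2, e3, e4, e5]
    have hfin1 : ν (W ⁻¹' B ∩ (Y0' ⁻¹' A ∩ Z' ⁻¹' C)) ≠ ⊤ := measure_ne_top _ _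
    have hfin2 : ν (Y0' ⁻¹' A) * ν (W ⁻¹' B ∩ Z' ⁻¹' C) ≠ ⊤ :=
      ENNReal.mul_ne_top (measure_ne_top _ _) (measure_ne_top _ _)
    have := (ENNReal.toReal_eq_toReal_iff' hfin1 hfin2).mp (by rw [key, ENNReal.toReal_mul])
    rw [show Y0' ⁻¹' A ∩ (W ⁻¹' B ∩ Z' ⁻¹' C) = W ⁻¹' B ∩ (Y0' ⁻¹' A ∩ Z' ⁻¹' C) by
      ext ω; simp only [Set.mem_inter_iff]; tauto]
    exact this
  -- independence of Y0' and the pair (W, Z') under ν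
  have hPind : IndepFun Y0' (fun ω => (W ω, Z' ω)) ν := by
    have hPmeas : Measurable (fun ω => (W ω, Z' ω)) := hW.prodMk hZ'
    have hind : Indep (MeasurableSpace.comap Y0' inferInstance)
        (MeasurableSpace.comap (fun ω => (W ω, Z' ω)) inferInstance) ν := by
      refine IndepSets.indep hY0'meas.comap_le hPmeas.comap_le
        (@MeasurableSpace.isPiSystem_measurableSet Ω (MeasurableSpace.comap Y0' inferInstance))
        (isPiSystem_prod.comap (fun ω => (W ω, Z' ω)))
        (@MeasurableSpace.generateFrom_measurableSet Ω
          (MeasurableSpace.comap Y0' inferInstance)).symm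
        ?_ ?_
      · conv_lhs => rw [← generateFrom_prod]
        rw [MeasurableSpace.comap_generateFrom]
        rfl
      · rintro t1 t2 ⟨A, hA, rfl⟩ ⟨u, ⟨B, hB, C, hC, rfl⟩, rfl⟩
        rw [Set.mk_preimage_prod]
        refine Filter.Eventually.of_forall fun a => ?_
        simpa [Kernel.const_apply] using hrectν hA hB hC
    exact hind
  -- transfer of integrals of functions of W from nu to mu
  have hν_eq : ∀ k : Ω → ℝ, ∫ ω, k ω ∂ν = (1-π)⁻¹ * ∫ ω in s0, k ω ∂μ := by
    intro k
    rw [hν_def, show (μ[|s0]) = (μ s0)⁻¹ • μ.restrict s0 from rfl, integral_smul_measure,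
      ENNReal.toReal_inv, hs0toReal, smul_eq_mul]
  have hφmeas : Measurable (fun z : ℝ => if z = 0 then (1:ℝ) else 0) :=
    Measurable.ite (measurableSet_eq) measurable_const measurable_const
  have hindicZ : (fun ω => if Z ω = 0 then (1:ℝ) else 0) = s0.indicator (fun _ => (1:ℝ)) := by
    funext ω; by_cases h : Z ω = 0 <;> simp [Set.indicator_apply, hs0_def, h]
  have hintZ : ∫ ω, (if Z ω = 0 then (1:ℝ) else 0) ∂μ = 1 - π := by
    rw [hindicZ, integral_indicator hs0, setIntegral_const, smul_eq_mul, mul_one, measureReal_def, hs0toReal]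
  have hφZint : Integrable (fun ω => if Z ω = 0 then (1:ℝ) else 0) μ := by
    rw [hindicZ]; exact (integrable_const 1).indicator hs0
  -- integral over s0 of a function independent of Z factorizes
  have hs0int : ∀ k : Ω → ℝ, Measurable k → Integrable k μ →
      IndepFun Z k μ → ∫ ω in s0, k ω ∂μ = (1 - π) * ∫ ω, k ω ∂μ := by
    intro k hkmeas hkint hkind
    have hindφ : IndepFun (fun ω => if Z ω = 0 then (1:ℝ) else 0) k μ := by
      have := hkind.comp hφmeas measurable_id
      simpa [Function.comp_def] using this
    have hmul := hindφ.integral_mul_eq_mul_integral hφZint.1 hkint.1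
    have hpt : (fun ω => if Z ω = 0 then (1:ℝ) else 0) * k = s0.indicator k := by
      funext ω; by_cases h : Z ω = 0 <;>
        simp [Set.indicator_apply, hs0_def, h, Pi.mul_apply]
    rw [hpt] at hmul
    rw [integral_indicator hs0] at hmul
    rw [hmul, hintZ]
  -- E_nu[Y0'] = E_mu[Y0']
  have hEY0ν : ∫ ω, Y0' ω ∂ν = ∫ ω, Y0' ω ∂μ := by
    rw [hν_eq, hs0int Y0' hY0'meas hY0'int hIZ.symm, ← mul_assoc,
      inv_mul_cancel₀ (by linarith : (1:ℝ) - π ≠ 0), one_mul]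
  have h1π : (1:ℝ) - π ≠ 0 := by linarith
  -- basic integrability facts
  have hρWmeas : Measurable (fun ω => 1 - ρ (W ω)) := measurable_const.sub (hρmeas.comp hW)
  have hρWb : ∀ ω, ‖1 - ρ (W ω)‖ ≤ 1 := by
    intro ω
    have h1 := (hρ01 (W ω)).1
    have h2 := (hρ01 (W ω)).2
    rw [Real.norm_eq_abs, abs_le]; constructor <;> linarith
  have hρWintμ : Integrable (fun ω => 1 - ρ (W ω)) μ :=
    ⟨hρWmeas.aestronglyMeasurable, HasFiniteIntegral.of_bounded (C := 1) (.of_forall hρWb)⟩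
  have hρWintν : Integrable (fun ω => 1 - ρ (W ω)) ν :=
    ⟨hρWmeas.aestronglyMeasurable, HasFiniteIntegral.of_bounded (C := 1) (.of_forall hρWb)⟩
  have hρWintν' : Integrable (fun ω => ρ (W ω)) ν := by
    have : (fun ω => ρ (W ω)) = fun ω => 1 - (1 - ρ (W ω)) := by funext ω; ring
    rw [this]; exact (integrable_const 1).sub hρWintν
  have hχmeas : Measurable (fun ω => if Z' ω = 0 then (1:ℝ) else 0) :=
    Measurable.ite (hZ' (measurableSet_singleton 0)) measurable_const measurable_const
  have hχ'meas : Measurable (fun ω => if Z' ω = 1 then (1:ℝ) else 0) :=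
    Measurable.ite (hZ' (measurableSet_singleton 1)) measurable_const measurable_const
  have hχ'int : Integrable (fun ω => if Z' ω = 1 then (1:ℝ) else 0) ν := by
    refine ⟨hχ'meas.aestronglyMeasurable,
      HasFiniteIntegral.of_bounded (C := 1) (.of_forall fun ω => ?_)⟩
    by_cases h : Z' ω = 1 <;> simp [h]
  -- pointwise identity for the control indicator
  have hχpt : ∀ ω, (if Z' ω = 0 then (1:ℝ) else 0) = 1 - (if Z' ω = 1 then (1:ℝ) else 0) := by
    intro ω; rcases hZ'01 ω with h | h <;> norm_num [h]
  -- the main set-integral computation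
  have hsetint : ∀ {B : Set 𝒲}, MeasurableSet B →
      ∫ ω in W ⁻¹' B, Y0' ω * (if Z' ω = 0 then (1:ℝ) else 0) ∂μ
        = (∫ ω', Y0' ω' ∂μ) * ((1 - π) * ∫ ω in W ⁻¹' B, (1 - ρ (W ω)) ∂μ) := by
    intro B hB
    have hWB : MeasurableSet (W ⁻¹' B) := hW hB
    have hWBm : MeasurableSet[MeasurableSpace.comap W inferInstance] (W ⁻¹' B) := ⟨B, hB, rfl⟩
    set f : Ω → ℝ := fun ω => Y0' ω * (if Z' ω = 0 then (1:ℝ) else 0) with hf_def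
    have hfmeas : Measurable f := hY0'meas.mul hχmeas
    have hfintμ : Integrable f μ := by
      refine hY0'int.norm.mono' hfmeas.aestronglyMeasurable (.of_forall fun ω => ?_)
      rw [hf_def, norm_mul]
      by_cases h : Z' ω = 0 <;> simp [h]
    -- step R1 : reduce to nu
    have hfae : f =ᵐ[μ] s0.indicator f := by
      filter_upwards [hb] with ω hω
      rcases hZ01 ω with h | h
      · have : ω ∈ s0 := h
        rw [Set.indicator_of_mem this]
      · have hz' : Z' ω = 1 := hω h
        have : ω ∉ s0 := by simp [hs0_def, h]
        rw [Set.indicator_of_notMem this, hf_def]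
        simp [hz']
    have hR1 : ∫ ω in W ⁻¹' B, f ω ∂μ = (1 - π) * ∫ ω in W ⁻¹' B, f ω ∂ν := by
      have e1 : ∫ ω in W ⁻¹' B, f ω ∂μ = ∫ ω, (W ⁻¹' B).indicator f ω ∂μ :=
        (integral_indicator hWB).symm
      have e2 : ∫ ω, (W ⁻¹' B).indicator f ω ∂μ
          = ∫ ω, (W ⁻¹' B).indicator (s0.indicator f) ω ∂μ := by
        refine integral_congr_ae ?_
        filter_upwards [hfae] with ω h
        by_cases hω : ω ∈ W ⁻¹' B
        · rw [Set.indicator_of_mem hω, Set.indicator_of_mem hω, h]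
        · rw [Set.indicator_of_notMem hω, Set.indicator_of_notMem hω]
      have e3 : (W ⁻¹' B).indicator (s0.indicator f) = s0.indicator ((W ⁻¹' B).indicator f) := by
        rw [Set.indicator_indicator, Set.indicator_indicator, Set.inter_comm]
      have e4 : ∫ ω, s0.indicator ((W ⁻¹' B).indicator f) ω ∂μ
          = ∫ ω in s0, (W ⁻¹' B).indicator f ω ∂μ := integral_indicator hs0
      have e5 := hν_eq ((W ⁻¹' B).indicator f)
      have e6 : ∫ ω in s0, (W ⁻¹' B).indicator f ω ∂μ
          = (1 - π) * ∫ ω, (W ⁻¹' B).indicator f ω ∂ν := by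
        have := e5
        field_simp at this ⊢
        linarith
      rw [e1, e2, e3, e4, e6, integral_indicator hWB]
    -- step R2 : factor the product under nu
    have hk2meas : Measurable (fun ω => (if W ω ∈ B then (1:ℝ) else 0) *
        (if Z' ω = 0 then (1:ℝ) else 0)) := by
      refine Measurable.mul ?_ hχmeas
      exact Measurable.ite (hW hB) measurable_const measurable_const
    have hθmeas : Measurable (fun p : 𝒲 × ℝ => (if p.1 ∈ B then (1:ℝ) else 0) *
        (if p.2 = 0 then (1:ℝ) else 0)) := by
      refine Measurable.mul ?_ ?_
      · exact Measurable.ite (measurable_fst hB) measurable_const measurable_const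
      · exact Measurable.ite (measurable_snd (measurableSet_singleton 0))
          measurable_const measurable_const
    have hθind : IndepFun Y0' (fun ω => (if W ω ∈ B then (1:ℝ) else 0) *
        (if Z' ω = 0 then (1:ℝ) else 0)) ν := by
      have := hPind.comp measurable_id hθmeas
      simpa [Function.comp_def] using this
    have hfac : ∫ ω, Y0' ω * ((if W ω ∈ B then (1:ℝ) else 0) *
          (if Z' ω = 0 then (1:ℝ) else 0)) ∂ν
        = (∫ ω, Y0' ω ∂ν) * ∫ ω, (if W ω ∈ B then (1:ℝ) else 0) *
          (if Z' ω = 0 then (1:ℝ) else 0) ∂ν := by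
      have := hθind.integral_mul_eq_mul_integral hY0'meas.aestronglyMeasurable hk2meas.aestronglyMeasurable
      exact this
    have hR2a : ∫ ω in W ⁻¹' B, f ω ∂ν = ∫ ω, Y0' ω * ((if W ω ∈ B then (1:ℝ) else 0) *
        (if Z' ω = 0 then (1:ℝ) else 0)) ∂ν := by
      rw [← integral_indicator hWB]
      refine integral_congr_ae (Filter.Eventually.of_forall fun ω => ?_)
      by_cases hω : ω ∈ W ⁻¹' B
      · rw [Set.indicator_of_mem hω, hf_def]
        have : W ω ∈ B := hω
        simp [this]
      · rw [Set.indicator_of_notMem hω]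
        have : W ω ∉ B := hω
        simp [this]
    have hR2b : ∫ ω, (if W ω ∈ B then (1:ℝ) else 0) * (if Z' ω = 0 then (1:ℝ) else 0) ∂ν
        = ∫ ω in W ⁻¹' B, (if Z' ω = 0 then (1:ℝ) else 0) ∂ν := by
      rw [← integral_indicator hWB]
      refine integral_congr_ae (Filter.Eventually.of_forall fun ω => ?_)
      by_cases hω : ω ∈ W ⁻¹' B
      · have : W ω ∈ B := hω
        rw [Set.indicator_of_mem hω]; simp [this]
      · have : W ω ∉ B := hω
        rw [Set.indicator_of_notMem hω]; simp [this]
    -- step R3 : conditional expectation of the diffusion indicator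
    have hR3 : ∫ ω in W ⁻¹' B, (if Z' ω = 0 then (1:ℝ) else 0) ∂ν
        = ∫ ω in W ⁻¹' B, (1 - ρ (W ω)) ∂ν := by
      have e1 : ∫ ω in W ⁻¹' B, (if Z' ω = 0 then (1:ℝ) else 0) ∂ν
          = ∫ ω in W ⁻¹' B, (1 - (if Z' ω = 1 then (1:ℝ) else 0)) ∂ν := by
        refine integral_congr_ae (Filter.Eventually.of_forall fun ω => ?_)
        exact hχpt ω
      have e2 : ∫ ω in W ⁻¹' B, (if Z' ω = 1 then (1:ℝ) else 0) ∂ν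
          = ∫ ω in W ⁻¹' B, ρ (W ω) ∂ν := by
        rw [← setIntegral_condExp hm hχ'int hWBm]
        refine setIntegral_congr_ae hWB ?_
        filter_upwards [hdρ] with ω h _
        exact h
      rw [e1, integral_sub (integrable_const 1) hχ'int.integrableOn, e2,
        integral_sub (integrable_const 1) hρWintν'.integrableOn]
    -- step R4 : transfer the W-integral from nu to mu
    have hR4 : ∫ ω in W ⁻¹' B, (1 - ρ (W ω)) ∂ν = ∫ ω in W ⁻¹' B, (1 - ρ (W ω)) ∂μ := by
      set k : Ω → ℝ := (W ⁻¹' B).indicator (fun ω => 1 - ρ (W ω)) with hk_def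
      have hkmeas : Measurable k := hρWmeas.indicator hWB
      have hkintμ : Integrable k μ := hρWintμ.indicator hWB
      have hkind : IndepFun Z k μ := by
        have hψmeas : Measurable (fun w : 𝒲 => (Set.indicator B (fun _ => (1:ℝ)) w) * (1 - ρ w)) :=
          (measurable_const.indicator hB).mul (measurable_const.sub hρmeas)
        have := ha.comp measurable_id hψmeas
        have hkeq : (fun ω => (Set.indicator B (fun _ => (1:ℝ)) (W ω)) * (1 - ρ (W ω))) = k := by
          funext ω
          by_cases hω : W ω ∈ B <;> simp [hk_def, Set.indicator_apply, hω]
        rw [← hkeq]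
        simpa [Function.comp_def] using this
      have e1 : ∫ ω, k ω ∂ν = (1-π)⁻¹ * ∫ ω in s0, k ω ∂μ := hν_eq k
      have e2 : ∫ ω in s0, k ω ∂μ = (1 - π) * ∫ ω, k ω ∂μ := hs0int k hkmeas hkintμ hkind
      have : ∫ ω, k ω ∂ν = ∫ ω, k ω ∂μ := by
        rw [e1, e2, ← mul_assoc, inv_mul_cancel₀ h1π, one_mul]
      rw [← integral_indicator hWB, ← integral_indicator hWB, ← hk_def, this]
    rw [hR1, hR2a, hfac, hR2b, hR3, hR4, hEY0ν]
    ring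
  -- apply the characterization of conditional expectation
  have hgoalcongr : (fun ω => Y0 ω * (if Z' ω = 0 then (1:ℝ) else 0)) =ᵐ[μ]
      (fun ω => Y0' ω * (if Z' ω = 0 then (1:ℝ) else 0)) := by
    filter_upwards [hY0eq] with ω h; rw [h]
  have hfintμ' : Integrable (fun ω => Y0' ω * (if Z' ω = 0 then (1:ℝ) else 0)) μ := by
    refine hY0'int.norm.mono' (hY0'meas.mul hχmeas).aestronglyMeasurable
      (.of_forall fun ω => ?_)
    rw [norm_mul]
    by_cases h : Z' ω = 0 <;> simp [h]
  have hgmeas : StronglyMeasurable[MeasurableSpace.comap W inferInstance]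
      (fun ω => (∫ ω', Y0' ω' ∂μ) * ((1 - π) * (1 - ρ (W ω)))) := by
    have hWm : Measurable[MeasurableSpace.comap W inferInstance] W :=
      measurable_iff_comap_le.mpr le_rfl
    exact (measurable_const.mul (measurable_const.mul
      (measurable_const.sub (hρmeas.comp hWm)))).stronglyMeasurable
  have hgintμ : Integrable (fun ω => (∫ ω', Y0' ω' ∂μ) * ((1 - π) * (1 - ρ (W ω)))) μ := by
    exact ((hρWintμ.const_mul (1 - π)).const_mul _)
  have hmain : (fun ω => (∫ ω', Y0' ω' ∂μ) * ((1 - π) * (1 - ρ (W ω)))) =ᵐ[μ]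
      μ[fun ω => Y0' ω * (if Z' ω = 0 then (1:ℝ) else 0) |
        MeasurableSpace.comap W inferInstance] := by
    refine ae_eq_condExp_of_forall_setIntegral_eq hm hfintμ'
      (fun s _ _ => hgintμ.integrableOn) (fun s hs _ => ?_)
      hgmeas.aestronglyMeasurable
    obtain ⟨B, hB, rfl⟩ := hs
    rw [hsetint hB, integral_const_mul, integral_const_mul]
  refine (condExp_congr_ae hgoalcongr).trans ?_
  refine hmain.symm.trans ?_
  have hEY : ∫ ω', Y0' ω' ∂μ = ∫ ω', Y0 ω' ∂μ := integral_congr_ae hY0eq.symm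
  refine Filter.Eventually.of_forall fun ω => ?_
  rw [hEY]
  ring
end
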